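/- arXiv:1303.1717 — 3 statements merged into one kernel-verified Lean document; each statement's English description precedes it below -/
import Mathlib

section
/- Let C be a collection of subsets of a type α with ∅ ∈ C and Set.univ ∈ C, and let (C_k) be the Boolean hierarchy over C (C₁ = C, C_{2k} = C_{2k-1} ∧ coC, C_{2k+1} = C_{2k} ∨ C, where ∧ and ∨ are elementwise intersection and union of classes, and coC = {Aᶜ | A ∈ C}). Then for every k ≥ 1, the complement class co(C_k) = {Aᶜ | A ∈ C_k} is contained in C_{k+1}. Consequently, the union BH(C) = ⋃_{k≥1} C_k is closed under complementation. -/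
def BH {α : Type*} (C : Set (Set α)) : ℕ → Set (Set α)
  | 0 => C
  | 1 => C
  | n + 2 =>
    if (n + 2) % 2 = 0 then
      {S | ∃ A ∈ BH C (n + 1), ∃ B ∈ C, S = A ∩ Bᶜ}
    else
      {S | ∃ A ∈ BH C (n + 1), ∃ B ∈ C, S = A ∪ B}

theorem bh_complement {α : Type*} (C : Set (Set α))
    (hempty : (∅ : Set α) ∈ C) (huniv : (Set.univ : Set α) ∈ C) :
    (∀ k, 1 ≤ k → {S | ∃ A ∈ BH C k, S = Aᶜ} ⊆ BH C (k + 1)) ∧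
    (∀ A : Set α, (∃ k, 1 ≤ k ∧ A ∈ BH C k) → (∃ k, 1 ≤ k ∧ Aᶜ ∈ BH C k)) := by
  have H : ∀ k, ∀ A : Set α, A ∈ BH C (k + 1) → Aᶜ ∈ BH C (k + 2) := by
    intro k
    induction k with
    | zero =>
      intro A hA
      show Aᶜ ∈ BH C 2
      simp only [BH, Set.mem_setOf_eq, if_pos (by norm_num : (0 + 2) % 2 = 0)]
      exact ⟨Set.univ, huniv, A, hA, by simp⟩
    | succ k ih =>
      intro A hA
      rcases Nat.mod_two_eq_zero_or_one k with h | h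
      · -- k even, so k+2 even, k+3 odd
        have h2 : (k + 2) % 2 = 0 := by omega
        have h3 : (k + 3) % 2 ≠ 0 := by omega
        simp only [BH, Set.mem_setOf_eq, if_pos h2] at hA
        obtain ⟨A', hA', B, hB, rfl⟩ := hA
        show (A' ∩ Bᶜ)ᶜ ∈ BH C (k + 1 + 2)
        have h3' : (k + 1 + 2) % 2 ≠ 0 := by omega
        simp only [BH, Set.mem_setOf_eq, if_neg h3']
        exact ⟨A'ᶜ, ih A' hA', B, hB, by simp [Set.compl_inter]⟩
      · -- k odd, so k+2 odd, k+3 even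
        have h2 : (k + 2) % 2 ≠ 0 := by omega
        simp only [BH, Set.mem_setOf_eq, if_neg h2] at hA
        obtain ⟨A', hA', B, hB, rfl⟩ := hA
        show (A' ∪ B)ᶜ ∈ BH C (k + 1 + 2)
        have h3' : (k + 1 + 2) % 2 = 0 := by omega
        simp only [BH, Set.mem_setOf_eq, if_pos h3']
        exact ⟨A'ᶜ, ih A' hA', B, hB, by simp [Set.compl_union]⟩
  constructor
  · intro k hk S hS
    obtain ⟨A, hA, rfl⟩ := hS
    obtain ⟨m, rfl⟩ := Nat.exists_eq_add_of_le hk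
    have : Aᶜ ∈ BH C (m + 2) := H m A (by simpa [Nat.add_comm] using hA)
    have e : 1 + (m + 1) = m + 2 := by omega
    rw [show 1 + m + 1 = m + 2 from by omega] <;> exact this
  · rintro A ⟨k, hk, hA⟩
    obtain ⟨m, rfl⟩ := Nat.exists_eq_add_of_le hk
    have : Aᶜ ∈ BH C (m + 2) := H m A (by simpa [Nat.add_comm] using hA)
    exact ⟨1 + m + 1, by omega, by rw [show 1 + m + 1 = m + 2 from by omega]; exact this⟩
end

section
/- Let X be a nonempty finite set and B a finite set, and let Q : B → Finset X be a function such that for every y ∈ B, the cardinality satisfies |X| < 3 · |Q y|. Then there exists an element w ∈ X such that |B| ≤ 3 · |{y ∈ B | w ∈ Q y}|. Equivalently, removing all y with w ∈ Q y leaves at most (2/3)·|B| elements: 3 · |{y ∈ B | w ∉ Q y}| ≤ 2 · |B|. -/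
theorem averaging_claim {α β : Type*} [DecidableEq α] [DecidableEq β]
    (X : Finset α) (hX : X.Nonempty) (B : Finset β) (Q : β → Finset α)
    (hsub : ∀ y ∈ B, Q y ⊆ X)
    (hbig : ∀ y ∈ B, X.card < 3 * (Q y).card) :
    ∃ w ∈ X, B.card ≤ 3 * (B.filter (fun y => w ∈ Q y)).card ∧
      3 * (B.filter (fun y => w ∉ Q y)).card ≤ 2 * B.card := by
  rcases B.eq_empty_or_nonempty with rfl | hB
  · obtain ⟨w, hw⟩ := hX
    exact ⟨w, hw, by simp, by simp⟩
  have hsum : ∑ w ∈ X, (B.filter (fun y => w ∈ Q y)).card = ∑ y ∈ B, (Q y).card := by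
    have h1 : ∀ w ∈ X, (B.filter (fun y => w ∈ Q y)).card
        = ∑ y ∈ B, (if w ∈ Q y then 1 else 0) := fun w _ => by rw [Finset.card_filter]
    rw [Finset.sum_congr rfl h1, Finset.sum_comm]
    refine Finset.sum_congr rfl fun y hy => ?_
    rw [← Finset.card_filter, Finset.filter_mem_eq_inter,
      Finset.inter_eq_right.mpr (hsub y hy)]
  -- there exists w with B.card ≤ 3 * count
  have key : ∃ w ∈ X, B.card ≤ 3 * (B.filter (fun y => w ∈ Q y)).card := by
    by_contra h
    push_neg at h
    have hlt : ∀ w ∈ X, 3 * (B.filter (fun y => w ∈ Q y)).card ≤ B.card - 1 := by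
      intro w hw
      have := h w hw
      omega
    have hup : 3 * ∑ w ∈ X, (B.filter (fun y => w ∈ Q y)).card ≤ X.card * (B.card - 1) := by
      rw [Finset.mul_sum]
      calc ∑ w ∈ X, 3 * (B.filter (fun y => w ∈ Q y)).card
          ≤ ∑ _w ∈ X, (B.card - 1) := Finset.sum_le_sum hlt
        _ = X.card * (B.card - 1) := by rw [Finset.sum_const, smul_eq_mul]
    have hlo : B.card * (X.card + 1) ≤ 3 * ∑ y ∈ B, (Q y).card := by
      rw [Finset.mul_sum]
      calc B.card * (X.card + 1) = ∑ _y ∈ B, (X.card + 1) := by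
            rw [Finset.sum_const, smul_eq_mul]
        _ ≤ ∑ y ∈ B, 3 * (Q y).card := Finset.sum_le_sum fun y hy => hbig y hy
    rw [hsum] at hup
    have hB1 : 1 ≤ B.card := hB.card_pos
    nlinarith [hX.card_pos, Nat.sub_add_cancel hB1]
  obtain ⟨w, hw, hle⟩ := key
  refine ⟨w, hw, hle, ?_⟩
  have hsplit : (B.filter (fun y => w ∈ Q y)).card + (B.filter (fun y => w ∉ Q y)).card
      = B.card := Finset.card_filter_add_card_filter_not _
  omega
end

section
/- Let C be a collection of subsets of a type α with ∅ ∈ C and Set.univ ∈ C, closed under binary union and binary intersection. Define Boolean hierarchies (C_k) over C as usual (C₁ = C, C_{2k} = C_{2k-1} ∧ coC, C_{2k+1} = C_{2k} ∨ C). Then the k-fold join ⋁_{i∈[k]} C₂ of the second level with itself is contained in C_{2k}, for every k ≥ 1. -/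
/-- The `k`-fold join of a class `D`: unions of `k` members of `D`. -/
def JoinK {α : Type*} (D : Set (Set α)) : ℕ → Set (Set α)
  | 0 => D
  | 1 => D
  | n + 2 => {S | ∃ A ∈ JoinK D (n + 1), ∃ B ∈ D, S = A ∪ B}

/-- Hausdorff chains: `Ch C k T S` means `S` is a union of `k` nested differences
of sets from `C`, with top set `T ∈ C` (or `T = ∅` for `k = 0`). -/
inductive Ch {α : Type*} (C : Set (Set α)) : ℕ → Set α → Set α → Prop where
  | zero : Ch C 0 ∅ ∅
  | succ {k : ℕ} {T' S' B T S : Set α} :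
      Ch C k T' S' → B ∈ C → T ∈ C → T' ⊆ B → B ⊆ T →
      S = (T ∩ Bᶜ) ∪ S' → Ch C (k + 1) T S

lemma ch_merge {α : Type*} {C : Set (Set α)}
    (hunion : ∀ A ∈ C, ∀ B ∈ C, A ∪ B ∈ C)
    (hinter : ∀ A ∈ C, ∀ B ∈ C, A ∩ B ∈ C) :
    ∀ {k : ℕ} {T S : Set α}, Ch C k T S → ∀ {A B : Set α}, A ∈ C → B ∈ C → B ⊆ A →
      Ch C (k + 1) (T ∪ A) (S ∪ (A ∩ Bᶜ)) := by
  intro k T S h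
  induction h with
  | zero =>
    intro A B hA hB hBA
    refine Ch.succ Ch.zero hB ?_ (by simp) ?_ ?_
    · simpa using hA
    · intro x hx; exact Or.inr (hBA hx)
    · ext x; simp
  | @succ k T' S' B₀ T S h hB₀ hT hT'B₀ hB₀T hS ih =>
    intro A B hA hB hBA
    have inner := ih (hinter T hT A hA) (hinter B₀ hB₀ B hB)
      (Set.inter_subset_inter hB₀T hBA)
    refine Ch.succ inner (hinter _ (hunion _ hB₀ _ hA) _ (hunion _ hT _ hB))
      (hunion _ hT _ hA) ?_ ?_ ?_
    · intro x hx
      rcases hx with hx | hx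
      · exact ⟨Or.inl (hT'B₀ hx), Or.inl (hB₀T (hT'B₀ hx))⟩
      · exact ⟨Or.inr hx.2, Or.inl hx.1⟩
    · intro x hx
      rcases hx.1 with h1 | h1
      · exact Or.inl (hB₀T h1)
      · exact Or.inr h1
    · subst hS; ext x; simp; tauto

lemma bh_odd_mem {α : Type*} {C : Set (Set α)} {X E : Set α} (j : ℕ)
    (hX : X ∈ BH C (2 * j + 2)) (hE : E ∈ C) : X ∪ E ∈ BH C (2 * j + 3) := by
  have e : 2 * j + 3 = (2 * j + 1) + 2 := by omega
  rw [e, BH, if_neg (by omega)]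
  exact ⟨X, hX, E, hE, rfl⟩

lemma bh_even_mem {α : Type*} {C : Set (Set α)} {Y F : Set α} (j : ℕ)
    (hY : Y ∈ BH C (2 * j + 3)) (hF : F ∈ C) : Y ∩ Fᶜ ∈ BH C (2 * j + 4) := by
  have e : 2 * j + 4 = (2 * j + 2) + 2 := by omega
  rw [e, BH, if_pos (by omega)]
  exact ⟨Y, hY, F, hF, rfl⟩

lemma ch_bh {α : Type*} {C : Set (Set α)} :
    ∀ {k : ℕ} {T S : Set α}, Ch C k T S → ∀ (j : ℕ) (X : Set α),
      X ∈ BH C (2 * j + 2) → X ∩ T = ∅ → X ∪ S ∈ BH C (2 * (j + k) + 2) := by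
  intro k T S h
  induction h with
  | zero => intro j X hX _; simpa using hX
  | @succ k T' S' B T S h hB hT hT'B hBT hS ih =>
    intro j X hX hdisj
    have hX1 : (X ∪ T) ∩ Bᶜ ∈ BH C (2 * (j + 1) + 2) := by
      have e : 2 * (j + 1) + 2 = 2 * j + 4 := by omega
      rw [e]
      exact bh_even_mem j (bh_odd_mem j hX hT) hB
    have hd1 : ((X ∪ T) ∩ Bᶜ) ∩ T' = ∅ := by
      ext x
      simp only [Set.mem_inter_iff, Set.mem_union, Set.mem_compl_iff, Set.mem_empty_iff_false,
        iff_false]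
      rintro ⟨⟨hx | hx, hnb⟩, ht'⟩
      · have : x ∈ X ∩ T := ⟨hx, hBT (hT'B ht')⟩
        rw [hdisj] at this; exact this
      · exact hnb (hT'B ht')
    have := ih (j + 1) _ hX1 hd1
    have e : 2 * (j + 1 + k) + 2 = 2 * (j + (k + 1)) + 2 := by omega
    rw [e] at this
    have hXB : X ∩ B = ∅ := by
      ext x
      simp only [Set.mem_inter_iff, Set.mem_empty_iff_false, iff_false]
      rintro ⟨hx, hb⟩
      have : x ∈ X ∩ T := ⟨hx, hBT hb⟩
      rw [hdisj] at this; exact this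
    have heq : ((X ∪ T) ∩ Bᶜ) ∪ S' = X ∪ S := by
      subst hS
      ext x
      have hxb : ¬(x ∈ X ∧ x ∈ B) := by
        intro ⟨h1, h2⟩
        have : x ∈ X ∩ B := ⟨h1, h2⟩
        rw [hXB] at this; exact this
      simp only [Set.mem_union, Set.mem_inter_iff, Set.mem_compl_iff]
      tauto
    rwa [heq] at this

lemma joinK_ch {α : Type*} {C : Set (Set α)}
    (hunion : ∀ A ∈ C, ∀ B ∈ C, A ∪ B ∈ C)
    (hinter : ∀ A ∈ C, ∀ B ∈ C, A ∩ B ∈ C) :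
    ∀ (k : ℕ) (S : Set α), S ∈ JoinK {S | ∃ A ∈ C, ∃ B ∈ C, S = A ∩ Bᶜ} (k + 1) →
      ∃ T, Ch C (k + 1) T S := by
  intro k
  induction k with
  | zero =>
    rintro S ⟨A, hA, B, hB, rfl⟩
    refine ⟨A, Ch.succ Ch.zero (hinter A hA B hB) hA (by simp) Set.inter_subset_left ?_⟩
    ext x; simp; tauto
  | succ k ih =>
    rintro S ⟨A, hA, B₂, ⟨P, hP, Q, hQ, rfl⟩, rfl⟩
    obtain ⟨T, hch⟩ := ih A hA
    have := ch_merge hunion hinter hch hP (hinter P hP Q hQ) Set.inter_subset_left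
    refine ⟨T ∪ P, ?_⟩
    have heq : A ∪ (P ∩ (P ∩ Q)ᶜ) = A ∪ (P ∩ Qᶜ) := by ext x; simp; tauto
    rwa [heq] at this

theorem joinK_second_level_subset_bh {α : Type*} (C : Set (Set α))
    (hempty : (∅ : Set α) ∈ C) (huniv : (Set.univ : Set α) ∈ C)
    (hunion : ∀ A ∈ C, ∀ B ∈ C, A ∪ B ∈ C)
    (hinter : ∀ A ∈ C, ∀ B ∈ C, A ∩ B ∈ C) :
    ∀ k, 1 ≤ k → JoinK {S | ∃ A ∈ C, ∃ B ∈ C, S = A ∩ Bᶜ} k ⊆ BH C (2 * k) := by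
  intro k hk S hS
  obtain ⟨k', rfl⟩ : ∃ k', k = k' + 1 := ⟨k - 1, by omega⟩
  obtain ⟨T, hch⟩ := joinK_ch hunion hinter k' S hS
  cases hch with
  | succ h hB hT hT'B hBT hSeq =>
    rename_i T' S' B
    have hX : T ∩ Bᶜ ∈ BH C (2 * 0 + 2) := by
      show T ∩ Bᶜ ∈ BH C (0 + 2)
      rw [BH, if_pos (by omega)]
      exact ⟨T, hT, B, hB, rfl⟩
    have hdisj : (T ∩ Bᶜ) ∩ T' = ∅ := by
      ext x
      simp only [Set.mem_inter_iff, Set.mem_compl_iff, Set.mem_empty_iff_false, iff_false]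
      rintro ⟨⟨_, hnb⟩, ht'⟩
      exact hnb (hT'B ht')
    have := ch_bh h 0 _ hX hdisj
    have e : 2 * (0 + k') + 2 = 2 * (k' + 1) := by omega
    rw [e] at this
    rwa [hSeq]
end
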